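/- Let d be an even positive integer and ζ a primitive d-th root of unity in ℂ. Let l' divide d with l = d/l' odd and l' even, and S = {l·s : 0 ≤ s < l'}. If a ≡ b ≡ l'/2 (mod l'), then ∑_{j,j' ∈ S} ζ^(ja + j'b) (-1)^(jj') = −l'^2 / 2. -/

import Mathlib

/-! Write `l = d / l'` and `l' = 2m`. Since `ζ ^ (l m)` is a primitive square root of unity, it
equals `-1`, so `a ≡ m (mod 2m)` gives `ζ ^ (l s a) = (-1) ^ s`; as `l` is odd,
`(-1) ^ (l s · l s') = (-1) ^ (s s')`. The sum becomes `∑ (-1) ^ (s + s' + s s')` over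
`s, s' < 2m`, whose inner sum vanishes for even `s` and is `-2m` for odd `s`. -/

open Finset

theorem zpow_natCast_mul_mul_eq_neg_one_pow {α : Type*} [DivisionMonoid α] [HasDistribNeg α]
    {η : α} {c n : ℕ} (h : η ^ (c * n) = -1) {x : ℤ} (hx : (2 * n : ℤ) ∣ x - n) (s : ℕ) :
    η ^ (((c * s : ℕ) : ℤ) * x) = (-1) ^ s := by
  obtain ⟨k, hk⟩ := hx
  have hexp : ((c * s : ℕ) : ℤ) * x = ((c * n : ℕ) : ℤ) * ((2 * k + 1) * s) := by
    rw [eq_add_of_sub_eq hk]; push_cast; ring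
  rw [hexp, zpow_mul, zpow_natCast, h, zpow_mul, (odd_two_mul_add_one k).neg_one_zpow,
    zpow_natCast]

theorem Odd.neg_one_pow_mul_mul {R : Type*} [Monoid R] [HasDistribNeg R] {l : ℕ} (hl : Odd l)
    (s s' : ℕ) : (-1 : R) ^ ((l * s) * (l * s')) = (-1) ^ (s * s') := by
  rw [show (l * s) * (l * s') = (l * l) * (s * s') by ring, pow_mul, (hl.mul hl).neg_one_pow]

theorem sum_range_two_mul_neg_one_pow_mul {R : Type*} [CommRing R] (m s : ℕ) :
    ∑ s' ∈ range (2 * m), (-1 : R) ^ s * (-1) ^ s' * (-1) ^ (s * s') = m * ((-1) ^ s - 1) := by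
  have hgeom : ∀ s', (-1 : R) ^ s * (-1) ^ s' * (-1) ^ (s * s') =
      (-1) ^ s * ((-1) ^ (s + 1)) ^ s' := by
    intro s'; rw [← pow_mul, add_mul, one_mul, pow_add]; ring
  simp_rw [hgeom, ← mul_sum]
  rcases Nat.even_or_odd s with hs | hs
  · simp [hs.neg_one_pow, hs.add_one.neg_one_pow, neg_one_geom_sum]
  · rw [hs.neg_one_pow, hs.add_one.neg_one_pow]
    simp only [one_pow, sum_const, card_range, nsmul_eq_mul]
    push_cast; ring

theorem sum_range_two_mul_sum_neg_one_pow {R : Type*} [CommRing R] (m : ℕ) :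
    ∑ s ∈ range (2 * m), ∑ s' ∈ range (2 * m), (-1 : R) ^ s * (-1) ^ s' * (-1) ^ (s * s') =
      -(2 * m ^ 2) := by
  simp_rw [sum_range_two_mul_neg_one_pow_mul, ← mul_sum, sum_sub_distrib, neg_one_geom_sum,
    if_pos (even_two_mul m)]
  simp only [sum_const, card_range, nsmul_eq_mul]
  push_cast; ring

theorem stmt_3_general (d l' : ℕ) (hl'e : Even l')
    (hdvd : l' ∣ d) (hlodd : Odd (d / l'))
    (ζ : ℂ) (hζ : IsPrimitiveRoot ζ d) (a b : ℤ)
    (ha : (l' : ℤ) ∣ (a - (l' / 2 : ℕ))) (hb : (l' : ℤ) ∣ (b - (l' / 2 : ℕ))) :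
    ∑ s ∈ Finset.range l', ∑ s' ∈ Finset.range l',
      ζ ^ (((d / l' * s : ℕ) : ℤ) * a + ((d / l' * s' : ℕ) : ℤ) * b) *
        (-1 : ℂ) ^ ((d / l' * s) * (d / l' * s')) = -((l' : ℂ) ^ 2 / 2) := by
  set l := d / l'
  obtain ⟨m, rfl⟩ := hl'e.two_dvd
  have hm : m ≠ 0 := by rintro rfl; simp [l] at hlodd
  have hlm : 0 < l * m := Nat.mul_pos hlodd.pos (Nat.pos_of_ne_zero hm)
  have hd : d = l * m * 2 := by rw [← Nat.mul_div_cancel' hdvd]; ring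
  have hhalf : ζ ^ (l * m) = -1 := by
    have h2 : d / (l * m) = 2 := by rw [hd, Nat.mul_div_cancel_left 2 hlm]
    exact (h2 ▸ hζ.pow_of_dvd hlm.ne' ⟨2, hd⟩).eq_neg_one_of_two_right
  have hζ0 : ζ ≠ 0 := hζ.ne_zero (by omega)
  rw [Nat.mul_div_cancel_left m two_pos] at ha hb
  push_cast at ha hb
  calc _ = ∑ s ∈ range (2 * m), ∑ s' ∈ range (2 * m),
        (-1 : ℂ) ^ s * (-1) ^ s' * (-1) ^ (s * s') := by
          refine sum_congr rfl fun s _ => sum_congr rfl fun s' _ => ?_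
          rw [zpow_add₀ hζ0, zpow_natCast_mul_mul_eq_neg_one_pow hhalf ha,
            zpow_natCast_mul_mul_eq_neg_one_pow hhalf hb, hlodd.neg_one_pow_mul_mul]
    _ = _ := by
      rw [sum_range_two_mul_sum_neg_one_pow]; push_cast; ring

theorem stmt_3 (d l' : ℕ) (hd : 0 < d) (hde : Even d) (hl' : 0 < l') (hl'e : Even l')
    (hdvd : l' ∣ d) (hlodd : Odd (d / l'))
    (ζ : ℂ) (hζ : IsPrimitiveRoot ζ d) (a b : ℤ)
    (ha : (l' : ℤ) ∣ (a - (l' / 2 : ℕ))) (hb : (l' : ℤ) ∣ (b - (l' / 2 : ℕ))) :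
    ∑ s ∈ Finset.range l', ∑ s' ∈ Finset.range l',
      ζ ^ (((d / l' * s : ℕ) : ℤ) * a + ((d / l' * s' : ℕ) : ℤ) * b) *
        (-1 : ℂ) ^ ((d / l' * s) * (d / l' * s')) = -((l' : ℂ) ^ 2 / 2) :=
  stmt_3_general d l' hl'e hdvd hlodd ζ hζ a b ha hb
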